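/- With Γ²₂ = y₃/x₃, Γ²₃ = y₂/x₃, Γ³₂ = -y₂/x₃, Γ³₃ = y₃/x₃ and all other Γⁱⱼ = 0, define the horizontal vector fields hᵢ = ∂/∂xᵢ - Γᵐᵢ ∂/∂yᵐ on the region x₃ ≠ 0 of ℝ³×ℝ³. Then the Lie bracket [h₂, h₃] equals -(y₃/x₃²) ∂/∂y₂ + (y₂/x₃²) ∂/∂y₃; in particular [h₂,h₃] is a purely vertical vector field and is nonzero whenever y₂² + y₃² ≠ 0. -/

import Mathlib

noncomputable section

/-- Lie bracket of vector fields on ℝ³ × ℝ³: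
[X,Y](p) = DY(p)·X(p) - DX(p)·Y(p). -/
def lieBracket (X Y : (Fin 3 → ℝ) × (Fin 3 → ℝ) → (Fin 3 → ℝ) × (Fin 3 → ℝ))
    (p : (Fin 3 → ℝ) × (Fin 3 → ℝ)) : (Fin 3 → ℝ) × (Fin 3 → ℝ) :=
  fderiv ℝ Y p (X p) - fderiv ℝ X p (Y p)

/-- The horizontal vector field h₂ = ∂/∂x₂ - (y₃/x₃) ∂/∂y₂ + (y₂/x₃) ∂/∂y₃
(0-based: base direction 1). -/
def hField2 (p : (Fin 3 → ℝ) × (Fin 3 → ℝ)) : (Fin 3 → ℝ) × (Fin 3 → ℝ) :=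
  (Pi.single 1 1, ![0, -(p.2 2) / p.1 2, p.2 1 / p.1 2])

/-- The horizontal vector field h₃ = ∂/∂x₃ - (y₂/x₃) ∂/∂y₂ - (y₃/x₃) ∂/∂y₃
(0-based: base direction 2). -/
def hField3 (p : (Fin 3 → ℝ) × (Fin 3 → ℝ)) : (Fin 3 → ℝ) × (Fin 3 → ℝ) :=
  (Pi.single 2 1, ![0, -(p.2 1) / p.1 2, -(p.2 2) / p.1 2])

/-!
Both fields have a constant base component, so their bracket is vertical, with fibre component
`DW·X - DV·Y` for the fibre components `V`, `W`; these are built from the quotients `yⱼ / x₃`,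
and the quotient rule evaluates it.
-/

open ContinuousLinearMap

theorem HasFDerivAt.div {𝕜 E : Type*} [NontriviallyNormedField 𝕜] [NormedAddCommGroup E]
    [NormedSpace 𝕜 E] {c d : E → 𝕜} {c' d' : E →L[𝕜] 𝕜} {x : E}
    (hc : HasFDerivAt c c' x) (hd : HasFDerivAt d d' x) (hx : d x ≠ 0) :
    HasFDerivAt (fun y => c y / d y) ((d x)⁻¹ • c' - (c x / d x ^ 2) • d') x := by
  simp only [div_eq_mul_inv]
  refine (hc.fun_mul ((hasFDerivAt_inv hx).comp x hd)).congr_fderiv ?_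
  ext v
  simp
  field_simp
  ring

theorem fderiv_snd_div_fst_apply {𝕜 : Type*} [NontriviallyNormedField 𝕜] {m n : ℕ}
    (i : Fin m) (j : Fin n) {p : (Fin m → 𝕜) × (Fin n → 𝕜)} (hp : p.1 i ≠ 0)
    (v : (Fin m → 𝕜) × (Fin n → 𝕜)) :
    fderiv 𝕜 (fun q : (Fin m → 𝕜) × (Fin n → 𝕜) => q.2 j / q.1 i) p v =
      (v.2 j * p.1 i - p.2 j * v.1 i) / p.1 i ^ 2 := by
  have hnum : HasFDerivAt (fun q : (Fin m → 𝕜) × (Fin n → 𝕜) => q.2 j) (proj j ∘L snd 𝕜 _ _) p :=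
    ((proj j : (Fin n → 𝕜) →L[𝕜] 𝕜) ∘L snd 𝕜 (Fin m → 𝕜) (Fin n → 𝕜)).hasFDerivAt
  have hden : HasFDerivAt (fun q : (Fin m → 𝕜) × (Fin n → 𝕜) => q.1 i) (proj i ∘L fst 𝕜 _ _) p :=
    ((proj i : (Fin m → 𝕜) →L[𝕜] 𝕜) ∘L fst 𝕜 (Fin m → 𝕜) (Fin n → 𝕜)).hasFDerivAt
  rw [(hnum.div hden hp).fderiv]
  simp
  field_simp

theorem fderiv_apply_apply {𝕜 E F ι : Type*} [NontriviallyNormedField 𝕜] [NormedAddCommGroup E]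
    [NormedSpace 𝕜 E] [NormedAddCommGroup F] [NormedSpace 𝕜 F] [Fintype ι]
    {Φ : E → ι → F} {x : E} (h : DifferentiableAt 𝕜 Φ x) (v : E) (i : ι) :
    fderiv 𝕜 Φ x v i = fderiv 𝕜 (fun y => Φ y i) x v := by
  rw [fderiv_apply h]
  rfl

theorem lieBracket_prodMk_const {a b : Fin 3 → ℝ} {V W : (Fin 3 → ℝ) × (Fin 3 → ℝ) → Fin 3 → ℝ}
    {p : (Fin 3 → ℝ) × (Fin 3 → ℝ)} (hV : DifferentiableAt ℝ V p) (hW : DifferentiableAt ℝ W p) :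
    lieBracket (fun q => (a, V q)) (fun q => (b, W q)) p =
      (0, fderiv ℝ W p (a, V p) - fderiv ℝ V p (b, W p)) := by
  rw [lieBracket, (differentiableAt_const a).fderiv_prodMk hV,
    (differentiableAt_const b).fderiv_prodMk hW]
  simp

theorem lieBracket_hField2_hField3 {p : (Fin 3 → ℝ) × (Fin 3 → ℝ)} (hp : p.1 2 ≠ 0) :
    lieBracket hField2 hField3 p = (0, ![0, -(p.2 2) / (p.1 2) ^ 2, p.2 1 / (p.1 2) ^ 2]) := by
  have hV : DifferentiableAt ℝ
      (fun q : (Fin 3 → ℝ) × (Fin 3 → ℝ) => ![0, -(q.2 2) / q.1 2, q.2 1 / q.1 2]) p := by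
    refine differentiableAt_pi.2 fun k => ?_
    fin_cases k <;> simp <;> fun_prop (disch := assumption)
  have hW : DifferentiableAt ℝ
      (fun q : (Fin 3 → ℝ) × (Fin 3 → ℝ) => ![0, -(q.2 1) / q.1 2, -(q.2 2) / q.1 2]) p := by
    refine differentiableAt_pi.2 fun k => ?_
    fin_cases k <;> simp <;> fun_prop (disch := assumption)
  unfold hField2 hField3
  rw [lieBracket_prodMk_const hV hW]
  ext k
  · simp
  simp only [Pi.sub_apply, fderiv_apply_apply hV, fderiv_apply_apply hW]
  fin_cases k <;> simp [neg_div, fderiv_snd_div_fst_apply _ _ hp] <;> field_simp <;> ring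

/-- [h₂,h₃] = -(y₃/x₃²) ∂/∂y₂ + (y₂/x₃²) ∂/∂y₃ is purely
vertical, and nonzero whenever y₂² + y₃² ≠ 0. -/
theorem stmt_9 (p : (Fin 3 → ℝ) × (Fin 3 → ℝ)) (hx : p.1 2 ≠ 0) :
    lieBracket hField2 hField3 p =
      (0, ![0, -(p.2 2) / (p.1 2) ^ 2, p.2 1 / (p.1 2) ^ 2]) ∧
    (lieBracket hField2 hField3 p).1 = 0 ∧
    ((p.2 1) ^ 2 + (p.2 2) ^ 2 ≠ 0 → lieBracket hField2 hField3 p ≠ 0) := by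
  have hbracket := lieBracket_hField2_hField3 hx
  refine ⟨hbracket, by rw [hbracket], fun hy hzero => hy ?_⟩
  rw [hbracket] at hzero
  have hy₂ := congrFun (congrArg Prod.snd hzero) 1
  have hy₃ := congrFun (congrArg Prod.snd hzero) 2
  simp [hx] at hy₂ hy₃
  simp [hy₂, hy₃]

end
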